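/- arXiv:2311.13349 — 6 statements merged into one kernel-verified Lean document; each statement's English description precedes it below -/
import Mathlib

section
/- Let items have profits p_i ≥ 0 and weights w_i with 0 < w_i ≤ c/2 for all i. Let Opt_c be the optimal profit of a 0-1 knapsack with capacity c, and let Opt_{c/2} be the optimal profit with capacity c/2 achieved by item set S. Let A be the optimal profit of the knapsack with capacity c − w(S) restricted to items not in S. Then P(S) + A ≥ (2/3)·Opt_c. -/
/-!
Let `T` be any packing of capacity `c`. If `T \ S` fits into the residual capacity, the heuristic
already collects `P(T ∩ S) + P(T \ S) ≤ P(S) + A`. Otherwise pack `T \ S` into the residual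
capacity item by item until some item `j` no longer fits, with `F` the items packed before it.
Then `F` is a residual solution, so `P(F) ≤ A`, while `w(F) + w j > c - w(S)` and `w(T) ≤ c`
make the rest `T \ (F ∪ {j})` weigh less than `w(S) ≤ c/2`, so its profit is at most `P(S)`.
As `w j ≤ c/2`, the item `j` alone is feasible for both stages, whence `p j ≤ min(P(S), A)` and
`P(T) ≤ P(S) + A + p j ≤ 3/2 (P(S) + A)`.
-/

open Finset

namespace Finset

theorem exists_sum_le_lt_sum_add {ι M : Type*} [DecidableEq ι] [AddCommMonoid M] [LinearOrder M]
    (w : ι → M) {r : M} (hr : 0 ≤ r) {D : Finset ι} (hD : r < ∑ i ∈ D, w i) :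
    ∃ F ⊆ D, ∃ j ∈ D, j ∉ F ∧ ∑ i ∈ F, w i ≤ r ∧ r < ∑ i ∈ F, w i + w j := by
  induction D using Finset.induction_on with
  | empty => exact absurd hr (by simpa using hD)
  | insert a D haD ih =>
    rw [sum_insert haD] at hD
    by_cases hlt : r < ∑ i ∈ D, w i
    · obtain ⟨F, hFD, j, hjD, hjF, hFr, hrF⟩ := ih hlt
      exact ⟨F, hFD.trans (subset_insert a D), j, mem_insert_of_mem hjD, hjF, hFr, hrF⟩
    · exact ⟨D, subset_insert a D, a, mem_insert_self a D, haD, not_lt.mp hlt, by rwa [add_comm]⟩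

end Finset

namespace Knapsack

variable {ι : Type*} [DecidableEq ι] {p w : ι → ℝ} {b c A : ℝ} {S T : Finset ι}

theorem sum_le_add_of_sdiff_fits (hw : ∀ i, 0 ≤ w i) (hSb : ∑ i ∈ S, w i ≤ b)
    (hSopt : ∀ U : Finset ι, ∑ i ∈ U, w i ≤ b → ∑ i ∈ U, p i ≤ ∑ i ∈ S, p i)
    (hAopt : ∀ B' : Finset ι, Disjoint B' S → ∑ i ∈ B', w i ≤ c - ∑ i ∈ S, w i →
      ∑ i ∈ B', p i ≤ A)
    (hfit : ∑ i ∈ T \ S, w i ≤ c - ∑ i ∈ S, w i) :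
    ∑ i ∈ T, p i ≤ ∑ i ∈ S, p i + A := by
  have hinter : ∑ i ∈ T ∩ S, p i ≤ ∑ i ∈ S, p i :=
    hSopt _ ((sum_le_sum_of_subset_of_nonneg inter_subset_right fun i _ _ => hw i).trans hSb)
  have hsdiff : ∑ i ∈ T \ S, p i ≤ A := hAopt _ sdiff_disjoint hfit
  rw [← sum_inter_add_sum_sdiff T S p]
  exact add_le_add hinter hsdiff

theorem exists_sum_le_add_add_of_sdiff_not_fits (hSc : ∑ i ∈ S, w i ≤ c)
    (hSb : ∑ i ∈ S, w i ≤ b)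
    (hSopt : ∀ U : Finset ι, ∑ i ∈ U, w i ≤ b → ∑ i ∈ U, p i ≤ ∑ i ∈ S, p i)
    (hAopt : ∀ B' : Finset ι, Disjoint B' S → ∑ i ∈ B', w i ≤ c - ∑ i ∈ S, w i →
      ∑ i ∈ B', p i ≤ A)
    (hT : ∑ i ∈ T, w i ≤ c) (hspill : c - ∑ i ∈ S, w i < ∑ i ∈ T \ S, w i) :
    ∃ j ∈ T \ S, ∑ i ∈ T, p i ≤ ∑ i ∈ S, p i + A + p j := by
  obtain ⟨F, hFD, j, hjD, hjF, hFfit, hFj⟩ :=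
    exists_sum_le_lt_sum_add w (sub_nonneg.mpr hSc) hspill
  have hFjT : insert j F ⊆ T := (insert_subset hjD hFD).trans sdiff_subset
  have hsplit (f : ι → ℝ) :
      ∑ i ∈ T, f i = ∑ i ∈ T \ insert j F, f i + (f j + ∑ i ∈ F, f i) := by
    rw [← sum_insert hjF, sum_sdiff hFjT]
  have hrest : ∑ i ∈ T \ insert j F, p i ≤ ∑ i ∈ S, p i := by
    apply hSopt
    linarith [hsplit w]
  have hF : ∑ i ∈ F, p i ≤ A := hAopt F (disjoint_of_subset_left hFD sdiff_disjoint) hFfit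
  refine ⟨j, hjD, ?_⟩
  linarith [hsplit p]

end Knapsack

theorem bottom_up_two_thirds_general {ι : Type*}
    (p w : ι → ℝ) (c : ℝ)
    (hw : ∀ i, 0 < w i) (hwc : ∀ i, w i ≤ c / 2)
    -- S : optimal solution set for capacity c/2
    (S : Finset ι)
    (hSfeas : ∑ i ∈ S, w i ≤ c / 2)
    (hSopt : ∀ U : Finset ι, ∑ i ∈ U, w i ≤ c / 2 → ∑ i ∈ U, p i ≤ ∑ i ∈ S, p i)
    -- A : optimal profit of the residual knapsack on items not in S with capacity c - w(S)
    (A : ℝ)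
    (hAopt : ∀ B' : Finset ι, Disjoint B' S → ∑ i ∈ B', w i ≤ c - ∑ i ∈ S, w i →
      ∑ i ∈ B', p i ≤ A)
    -- Opt_c : optimal profit for capacity c
    (Optc : ℝ) (T : Finset ι)
    (hTfeas : ∑ i ∈ T, w i ≤ c)
    (hTval : Optc = ∑ i ∈ T, p i) :
    ∑ i ∈ S, p i + A ≥ (2 / 3) * Optc := by
  classical
  have hw0 : ∀ i, 0 ≤ w i := fun i => (hw i).le
  have hS0 : 0 ≤ ∑ i ∈ S, w i := sum_nonneg fun i _ => hw0 i
  have hPS : 0 ≤ ∑ i ∈ S, p i := by simpa using hSopt ∅ (by simp; linarith)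
  have hA : 0 ≤ A := by simpa using hAopt ∅ (disjoint_empty_left S) (by simp; linarith)
  rw [hTval]
  rcases le_or_gt (∑ i ∈ T \ S, w i) (c - ∑ i ∈ S, w i) with hfit | hspill
  · linarith [Knapsack.sum_le_add_of_sdiff_fits hw0 hSfeas hSopt hAopt hfit]
  · obtain ⟨j, hj, hT⟩ :=
      Knapsack.exists_sum_le_add_add_of_sdiff_not_fits (by linarith) hSfeas hSopt hAopt hTfeas hspill
    have hjS : p j ≤ ∑ i ∈ S, p i := by simpa using hSopt {j} (by simpa using hwc j)
    have hjA : p j ≤ A := by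
      simpa using hAopt {j} (disjoint_singleton_left.mpr (mem_sdiff.mp hj).2)
        (by simp; linarith [hwc j])
    linarith

/-- Bottom-up iterative knapsack heuristic achieves at least 2/3 of the optimum
when all item weights are at most `c/2`. -/
theorem bottom_up_two_thirds {ι : Type*} [Fintype ι] [DecidableEq ι]
    (p w : ι → ℝ) (c : ℝ)
    (hp : ∀ i, 0 ≤ p i) (hw : ∀ i, 0 < w i) (hwc : ∀ i, w i ≤ c / 2)
    -- S : optimal solution set for capacity c/2
    (S : Finset ι)
    (hSfeas : ∑ i ∈ S, w i ≤ c / 2)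
    (hSopt : ∀ U : Finset ι, ∑ i ∈ U, w i ≤ c / 2 → ∑ i ∈ U, p i ≤ ∑ i ∈ S, p i)
    -- A : optimal profit of the residual knapsack on items not in S with capacity c - w(S)
    (A : ℝ) (B : Finset ι)
    (hBdisj : Disjoint B S)
    (hBfeas : ∑ i ∈ B, w i ≤ c - ∑ i ∈ S, w i)
    (hAB : A = ∑ i ∈ B, p i)
    (hAopt : ∀ B' : Finset ι, Disjoint B' S → ∑ i ∈ B', w i ≤ c - ∑ i ∈ S, w i →
      ∑ i ∈ B', p i ≤ A)
    -- Opt_c : optimal profit for capacity c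
    (Optc : ℝ) (T : Finset ι)
    (hTfeas : ∑ i ∈ T, w i ≤ c)
    (hTval : Optc = ∑ i ∈ T, p i)
    (hTopt : ∀ U : Finset ι, ∑ i ∈ U, w i ≤ c → ∑ i ∈ U, p i ≤ Optc) :
    ∑ i ∈ S, p i + A ≥ (2 / 3) * Optc :=
  bottom_up_two_thirds_general p w c hw hwc S hSfeas hSopt A hAopt Optc T hTfeas hTval
end

section
/- Let items have profits p_i ≥ 0 and weights 0 < w_i ≤ c/2. Let T be an optimal solution set for the knapsack with capacity c. Let D be the optimal profit of the knapsack with capacity c/2 restricted to items in T. Then D ≥ (1/2)·Opt_{c/2}, where Opt_{c/2} is the optimal profit of the unrestricted knapsack with capacity c/2. -/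
/-!
Let `S` be optimal for capacity `c/2`. Fill the room `c - w(S)` with items of `T \ S` until no
further one fits, obtaining `W`. Then `S ∪ W` fits into capacity `c`, so optimality of `T` gives
`p(S) ≤ p(T \ W)`. Either `T \ W ⊆ S`, and then `T \ W` itself fits into `c/2`; or some item
`i ∈ T \ (S ∪ W)` overflowed the room, and then `(T \ W) \ {i}` fits into `c/2`, since
`w(T \ W) - w(i) < w(T) - c + w(S) ≤ w(S)`. Either way `T \ W` is the union of at most two subsets
of `T` fitting into `c/2`, so `p(T \ W) ≤ 2D`.
-/

open Finset

section Knapsack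

variable {ι : Type*} [DecidableEq ι] (p w : ι → ℝ)

theorem exists_subset_sum_le_saturated (R : Finset ι) {b : ℝ} (hb : 0 ≤ b) :
    ∃ W ⊆ R, ∑ i ∈ W, w i ≤ b ∧ ∀ i ∈ R, i ∉ W → b < ∑ j ∈ insert i W, w j := by
  obtain ⟨W, hW, hmax⟩ := (R.powerset.filter fun W => ∑ i ∈ W, w i ≤ b).exists_max_image card
    ⟨∅, by simpa using hb⟩
  rw [mem_filter, mem_powerset] at hW
  refine ⟨W, hW.1, hW.2, fun i hiR hiW => lt_of_not_ge fun hfit => ?_⟩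
  have := hmax (insert i W) (mem_filter.2 ⟨mem_powerset.2 (insert_subset hiR hW.1), hfit⟩)
  rw [card_insert_of_notMem hiW] at this
  omega

theorem sum_le_sum_sdiff_of_forall_sum_le {T S W : Finset ι} {c : ℝ}
    (hTopt : ∀ U : Finset ι, ∑ i ∈ U, w i ≤ c → ∑ i ∈ U, p i ≤ ∑ i ∈ T, p i)
    (hWT : W ⊆ T) (hSW : Disjoint S W) (hfit : ∑ i ∈ S, w i + ∑ i ∈ W, w i ≤ c) :
    ∑ i ∈ S, p i ≤ ∑ i ∈ T \ W, p i := by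
  have := hTopt (S ∪ W) (by rwa [sum_union hSW])
  rw [sum_union hSW, ← sum_sdiff hWT] at this
  linarith

theorem sum_le_two_mul_of_sum_erase_le {T Y : Finset ι} {cap D : ℝ}
    (hDopt : ∀ E ⊆ T, ∑ i ∈ E, w i ≤ cap → ∑ i ∈ E, p i ≤ D)
    (hYT : Y ⊆ T) {i : ι} (hi : i ∈ Y) (hwi : w i ≤ cap) (hY : ∑ j ∈ Y.erase i, w j ≤ cap) :
    ∑ j ∈ Y, p j ≤ 2 * D := by
  rw [← sum_erase_add Y p hi, two_mul]
  exact add_le_add (hDopt _ ((erase_subset i Y).trans hYT) hY)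
    (by simpa using hDopt {i} (singleton_subset_iff.2 (hYT hi)) (by simpa using hwi))

end Knapsack

theorem top_down_one_half_general {ι : Type*}
    (p w : ι → ℝ) (c : ℝ)
    (hw : ∀ i, 0 < w i) (hwc : ∀ i, w i ≤ c / 2)
    -- T : optimal solution set for capacity c
    (T : Finset ι)
    (hTfeas : ∑ i ∈ T, w i ≤ c)
    (hTopt : ∀ U : Finset ι, ∑ i ∈ U, w i ≤ c → ∑ i ∈ U, p i ≤ ∑ i ∈ T, p i)
    -- D : optimal profit for capacity c/2 restricted to the items of T
    (D : ℝ)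
    (hDopt : ∀ E' : Finset ι, E' ⊆ T → ∑ i ∈ E', w i ≤ c / 2 → ∑ i ∈ E', p i ≤ D)
    -- Opt_{c/2} : unrestricted optimal profit for capacity c/2
    (Opthalf : ℝ) (Sh : Finset ι)
    (hShfeas : ∑ i ∈ Sh, w i ≤ c / 2)
    (hShval : Opthalf = ∑ i ∈ Sh, p i) :
    D ≥ (1 / 2) * Opthalf := by
  classical
  have hwnn : ∀ i, 0 ≤ w i := fun i => (hw i).le
  have hwSh : 0 ≤ ∑ i ∈ Sh, w i := sum_nonneg fun i _ => hwnn i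
  have hD : 0 ≤ D := by
    simpa using hDopt ∅ (empty_subset T) (by simpa using hwSh.trans hShfeas)
  obtain ⟨W, hWT, hWroom, hWsat⟩ :=
    exists_subset_sum_le_saturated w (T \ Sh) (b := c - ∑ i ∈ Sh, w i) (by linarith)
  have hexch : ∑ i ∈ Sh, p i ≤ ∑ i ∈ T \ W, p i :=
    sum_le_sum_sdiff_of_forall_sum_le p w hTopt (hWT.trans sdiff_subset)
      (disjoint_sdiff.mono_right hWT) (by linarith)
  suffices ∑ i ∈ T \ W, p i ≤ 2 * D by rw [hShval]; linarith
  by_cases hfull : T \ Sh ⊆ W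
  · have hfits := (sum_le_sum_of_subset_of_nonneg (sdiff_le_comm.1 hfull) fun i _ _ => hwnn i)
    linarith [hDopt (T \ W) sdiff_subset (hfits.trans hShfeas)]
  · obtain ⟨i, hiR, hiW⟩ := not_subset.1 hfull
    have hiT := (mem_sdiff.1 hiR).1
    refine sum_le_two_mul_of_sum_erase_le p w hDopt sdiff_subset (mem_sdiff.2 ⟨hiT, hiW⟩) (hwc i) ?_
    rw [← sdiff_insert, sum_sdiff_eq_sub (insert_subset hiT (hWT.trans sdiff_subset))]
    linarith [hWsat i hiR hiW]

/-- Top-down iterative knapsack heuristic achieves at least 1/2 of the optimum at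
capacity `c/2` when all item weights are at most `c/2`. -/
theorem top_down_one_half {ι : Type*} [Fintype ι] [DecidableEq ι]
    (p w : ι → ℝ) (c : ℝ)
    (hp : ∀ i, 0 ≤ p i) (hw : ∀ i, 0 < w i) (hwc : ∀ i, w i ≤ c / 2)
    -- T : optimal solution set for capacity c
    (T : Finset ι)
    (hTfeas : ∑ i ∈ T, w i ≤ c)
    (hTopt : ∀ U : Finset ι, ∑ i ∈ U, w i ≤ c → ∑ i ∈ U, p i ≤ ∑ i ∈ T, p i)
    -- D : optimal profit for capacity c/2 restricted to the items of T
    (D : ℝ) (E : Finset ι)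
    (hET : E ⊆ T)
    (hEfeas : ∑ i ∈ E, w i ≤ c / 2)
    (hDE : D = ∑ i ∈ E, p i)
    (hDopt : ∀ E' : Finset ι, E' ⊆ T → ∑ i ∈ E', w i ≤ c / 2 → ∑ i ∈ E', p i ≤ D)
    -- Opt_{c/2} : unrestricted optimal profit for capacity c/2
    (Opthalf : ℝ) (Sh : Finset ι)
    (hShfeas : ∑ i ∈ Sh, w i ≤ c / 2)
    (hShval : Opthalf = ∑ i ∈ Sh, p i)
    (hShopt : ∀ U : Finset ι, ∑ i ∈ U, w i ≤ c / 2 → ∑ i ∈ U, p i ≤ Opthalf) :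
    D ≥ (1 / 2) * Opthalf :=
  top_down_one_half_general p w c hw hwc T hTfeas hTopt D hDopt Opthalf Sh hShfeas hShval
end

section
/- The bound 1/2 for the top-down iterative knapsack heuristic is tight: there exists an instance with all weights ≤ c/2 (four items with weights c/3, c/3, c/3, c/2 and profits P+ε, P+ε, P+ε, 2P) where the optimal capacity-c solution is the three items of weight c/3, the restricted capacity-c/2 problem on those items yields profit P+ε, while the unrestricted capacity-c/2 optimum is 2P; hence the ratio tends to 1/2. -/
/-!
Items `0, 1, 2` are interchangeable, so weight and profit of a set `U` depend only on the number
`k` of small items in it and on whether it contains the large item `3`. A capacity bound on the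
weight `k c / 3 (+ c / 2)` bounds the natural number `k`, which bounds the profit
`k (P + ε) (+ 2 P)`; the bounds are attained by `{0, 1, 2}`, `{0}` and `{3}`.
-/

open Finset

theorem Finset.sum_eq_card_erase_nsmul_add_ite {ι M : Type*} [DecidableEq ι] [AddCommMonoid M]
    (f : ι → M) (j : ι) (a : M) (hf : ∀ i, i ≠ j → f i = a) (U : Finset ι) :
    ∑ i ∈ U, f i = #(U.erase j) • a + if j ∈ U then f j else 0 := by
  by_cases hj : j ∈ U
  · rw [if_pos hj, ← sum_erase_add U f hj,
      sum_congr rfl fun i hi => hf i (ne_of_mem_erase hi), sum_const]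
  · rw [if_neg hj, add_zero, erase_eq_of_notMem hj,
      sum_congr rfl fun i hi => hf i (ne_of_mem_of_not_mem hi hj), sum_const]

theorem Nat.cast_le_of_mul_le_of_lt_succ_mul (k : ℕ) {m : ℕ} {a b : ℝ} (ha : 0 < a)
    (h : k * a ≤ b) (hb : b < (m + 1) * a) : (k : ℝ) ≤ m := by
  have hk : (k : ℝ) < m + 1 := lt_of_mul_lt_mul_right (h.trans_lt hb) ha.le
  exact_mod_cast Nat.lt_succ_iff.mp (by exact_mod_cast hk)

noncomputable def tightWeights (c : ℝ) : Fin 4 → ℝ := ![c / 3, c / 3, c / 3, c / 2]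

noncomputable def tightProfits (P ε : ℝ) : Fin 4 → ℝ := ![P + ε, P + ε, P + ε, 2 * P]

section TightInstance

variable {c P ε : ℝ}

theorem sum_tightWeights (U : Finset (Fin 4)) :
    ∑ i ∈ U, tightWeights c i = #(U.erase 3) * (c / 3) + if 3 ∈ U then c / 2 else 0 := by
  rw [sum_eq_card_erase_nsmul_add_ite _ 3 (c / 3), nsmul_eq_mul]
  · rfl
  · intro i hi
    fin_cases i <;> simp_all [tightWeights]

theorem sum_tightProfits (U : Finset (Fin 4)) :
    ∑ i ∈ U, tightProfits P ε i = #(U.erase 3) * (P + ε) + if 3 ∈ U then 2 * P else 0 := by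
  rw [sum_eq_card_erase_nsmul_add_ite _ 3 (P + ε), nsmul_eq_mul]
  · rfl
  · intro i hi
    fin_cases i <;> simp_all [tightProfits]

theorem sum_tightProfits_le_of_le (hc : 0 < c) (hε : 0 ≤ ε) (hPε : 0 ≤ P + ε)
    (U : Finset (Fin 4)) (hU : ∑ i ∈ U, tightWeights c i ≤ c) :
    ∑ i ∈ U, tightProfits P ε i ≤ 3 * (P + ε) := by
  rw [sum_tightWeights] at hU
  rw [sum_tightProfits]
  generalize #(U.erase 3) = k at hU ⊢
  split_ifs at hU ⊢
  · have hk := Nat.cast_le_of_mul_le_of_lt_succ_mul k (a := c / 3) (m := 1) (b := c / 2) (by positivity) (by linarith) (by linarith)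
    push_cast at hk
    nlinarith
  · have hk := Nat.cast_le_of_mul_le_of_lt_succ_mul k (a := c / 3) (m := 3) (b := c) (by positivity) (by linarith) (by linarith)
    push_cast at hk
    nlinarith

theorem sum_tightProfits_le_of_le_half_of_notMem (hc : 0 < c) (hPε : 0 ≤ P + ε)
    (U : Finset (Fin 4)) (hU3 : 3 ∉ U) (hU : ∑ i ∈ U, tightWeights c i ≤ c / 2) :
    ∑ i ∈ U, tightProfits P ε i ≤ P + ε := by
  rw [sum_tightWeights, if_neg hU3, add_zero] at hU
  rw [sum_tightProfits, if_neg hU3, add_zero]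
  generalize #(U.erase 3) = k at hU ⊢
  have hk := Nat.cast_le_of_mul_le_of_lt_succ_mul k (a := c / 3) (m := 1) (by positivity) hU (by linarith)
  push_cast at hk
  nlinarith

theorem sum_tightProfits_le_of_le_half (hc : 0 < c) (hPε : 0 ≤ P + ε) (hεP : ε ≤ P)
    (U : Finset (Fin 4)) (hU : ∑ i ∈ U, tightWeights c i ≤ c / 2) :
    ∑ i ∈ U, tightProfits P ε i ≤ 2 * P := by
  by_cases hU3 : 3 ∈ U
  · rw [sum_tightWeights, if_pos hU3] at hU
    rw [sum_tightProfits, if_pos hU3]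
    generalize #(U.erase 3) = k at hU ⊢
    have hk := Nat.cast_le_of_mul_le_of_lt_succ_mul k (a := c / 3) (m := 0) (b := 0) (by positivity) (by linarith) (by linarith)
    push_cast at hk
    nlinarith
  · have : ∑ i ∈ U, tightProfits P ε i ≤ P + ε :=
      sum_tightProfits_le_of_le_half_of_notMem hc hPε U hU3 hU
    linarith

end TightInstance

theorem top_down_one_half_tight_general (c P ε : ℝ) (hc : 0 < c)
    (hε : 0 < ε) (hεP : ε ≤ P) :
    ∃ w p : Fin 4 → ℝ,
      w = ![c / 3, c / 3, c / 3, c / 2] ∧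
      p = ![P + ε, P + ε, P + ε, 2 * P] ∧
      (∀ i, 0 < w i ∧ w i ≤ c / 2) ∧ (∀ i, 0 ≤ p i) ∧
      ∃ T : Finset (Fin 4),
        T = {0, 1, 2} ∧
        -- T is an optimal solution for capacity c
        (∑ i ∈ T, w i ≤ c) ∧
        (∀ U : Finset (Fin 4), ∑ i ∈ U, w i ≤ c → ∑ i ∈ U, p i ≤ ∑ i ∈ T, p i) ∧
        -- restricted capacity-c/2 optimum on items of T has value P + ε
        (∃ E : Finset (Fin 4), E ⊆ T ∧ ∑ i ∈ E, w i ≤ c / 2 ∧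
          (∀ E' : Finset (Fin 4), E' ⊆ T → ∑ i ∈ E', w i ≤ c / 2 →
            ∑ i ∈ E', p i ≤ ∑ i ∈ E, p i) ∧
          ∑ i ∈ E, p i = P + ε) ∧
        -- unrestricted capacity-c/2 optimum has value 2P
        (∃ F : Finset (Fin 4), ∑ i ∈ F, w i ≤ c / 2 ∧
          (∀ U : Finset (Fin 4), ∑ i ∈ U, w i ≤ c / 2 →
            ∑ i ∈ U, p i ≤ ∑ i ∈ F, p i) ∧
          ∑ i ∈ F, p i = 2 * P) := by
  have hT : ∑ i ∈ {0, 1, 2}, tightProfits P ε i = 3 * (P + ε) := by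
    simp [tightProfits]; ring
  refine ⟨tightWeights c, tightProfits P ε, rfl, rfl, ?_, ?_, {0, 1, 2}, rfl, ?_,
    fun U hU => hT ▸ sum_tightProfits_le_of_le hc hε.le (by linarith) U hU,
    ⟨{0}, by decide, ?_, fun E hE hEw => ?_, by simp [tightProfits]⟩,
    ⟨{3}, ?_, fun U hU => ?_, by simp [tightProfits]⟩⟩
  · intro i
    fin_cases i <;> simp [tightWeights, hc] <;> linarith
  · intro i
    fin_cases i <;> simp [tightProfits] <;> linarith
  · simp [tightWeights]; linarith
  · simp [tightWeights]; linarith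
  · simpa [tightProfits] using sum_tightProfits_le_of_le_half_of_notMem hc (by linarith) E
      (fun h => by simpa using hE h) hEw
  · simp [tightWeights]
  · simpa [tightProfits] using sum_tightProfits_le_of_le_half hc (by linarith) hεP U hU

/-- Tightness of the 1/2 bound for the top-down iterative knapsack heuristic:
four items of weights `c/3, c/3, c/3, c/2` and profits `P+ε, P+ε, P+ε, 2P`;
the optimal capacity-`c` solution is `{0,1,2}`, the restricted capacity-`c/2`
optimum on those items is `P+ε`, while the unrestricted capacity-`c/2` optimum is `2P`. -/
theorem top_down_one_half_tight (c P ε : ℝ) (hc : 0 < c) (hP : 0 < P)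
    (hε : 0 < ε) (hεP : ε ≤ P) :
    ∃ w p : Fin 4 → ℝ,
      w = ![c / 3, c / 3, c / 3, c / 2] ∧
      p = ![P + ε, P + ε, P + ε, 2 * P] ∧
      (∀ i, 0 < w i ∧ w i ≤ c / 2) ∧ (∀ i, 0 ≤ p i) ∧
      ∃ T : Finset (Fin 4),
        T = {0, 1, 2} ∧
        -- T is an optimal solution for capacity c
        (∑ i ∈ T, w i ≤ c) ∧
        (∀ U : Finset (Fin 4), ∑ i ∈ U, w i ≤ c → ∑ i ∈ U, p i ≤ ∑ i ∈ T, p i) ∧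
        -- restricted capacity-c/2 optimum on items of T has value P + ε
        (∃ E : Finset (Fin 4), E ⊆ T ∧ ∑ i ∈ E, w i ≤ c / 2 ∧
          (∀ E' : Finset (Fin 4), E' ⊆ T → ∑ i ∈ E', w i ≤ c / 2 →
            ∑ i ∈ E', p i ≤ ∑ i ∈ E, p i) ∧
          ∑ i ∈ E, p i = P + ε) ∧
        -- unrestricted capacity-c/2 optimum has value 2P
        (∃ F : Finset (Fin 4), ∑ i ∈ F, w i ≤ c / 2 ∧
          (∀ U : Finset (Fin 4), ∑ i ∈ U, w i ≤ c / 2 →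
            ∑ i ∈ U, p i ≤ ∑ i ∈ F, p i) ∧
          ∑ i ∈ F, p i = 2 * P) :=
  top_down_one_half_tight_general c P ε hc hε hεP
end

section
/- Let T be an optimal knapsack solution for capacity c with item weights ≤ c/2, and partition T into three parts D1, D2, D3 each of total weight ≤ c/2, where D3 is disjoint from an optimal capacity-c/2 solution S of the full instance. Then max(P(D1), P(D2), P(D3)) ≥ (1/2)·P(S). -/
/-!
Adding the items of `D₃` to `S` gives a set of weight at most `c/2 + c/2 = c`, since `D₃` and `S`
are disjoint; optimality of `T = D₁ ∪ D₂ ∪ D₃` then yields `P(S) + P(D₃) ≤ P(D₁) + P(D₂) + P(D₃)`,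
so `P(S) ≤ P(D₁) + P(D₂) ≤ 2 · max (P(D₁), P(D₂))`.
-/

open Finset

theorem half_mul_le_max_of_le_add {K : Type*} [Field K] [LinearOrder K] [IsStrictOrderedRing K]
    {a x y : K} (h : a ≤ x + y) : 1 / 2 * a ≤ max x y := by
  linarith [le_max_left x y, le_max_right x y]

section Knapsack

variable {ι M P : Type*} [DecidableEq ι] [AddCommMonoid M] [LE M] [AddCommMonoid P] [LE P]
  {p : ι → P} {w : ι → M} {c : M} {T : Finset ι}

theorem sum_add_sum_le_of_forall_sum_le (hTopt : ∀ U : Finset ι, ∑ i ∈ U, w i ≤ c →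
    ∑ i ∈ U, p i ≤ ∑ i ∈ T, p i) {A B : Finset ι} (hAB : Disjoint A B)
    (hw : ∑ i ∈ A, w i + ∑ i ∈ B, w i ≤ c) :
    ∑ i ∈ A, p i + ∑ i ∈ B, p i ≤ ∑ i ∈ T, p i := by
  rw [← sum_union hAB]
  exact hTopt (A ∪ B) (by rwa [sum_union hAB])

end Knapsack

theorem sum_union_union_of_pairwise_disjoint {ι M : Type*} [DecidableEq ι] [AddCommMonoid M]
    (f : ι → M) {A B C : Finset ι} (hAB : Disjoint A B) (hAC : Disjoint A C)
    (hBC : Disjoint B C) :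
    ∑ i ∈ A ∪ B ∪ C, f i = ∑ i ∈ A, f i + ∑ i ∈ B, f i + ∑ i ∈ C, f i := by
  rw [sum_union (disjoint_union_left.mpr ⟨hAC, hBC⟩), sum_union hAB]

theorem three_part_max_ge_half_general {ι : Type*} [DecidableEq ι]
    (p w : ι → ℝ) (c : ℝ)
    -- T : optimal solution set for capacity c
    (T : Finset ι)
    (hTopt : ∀ U : Finset ι, ∑ i ∈ U, w i ≤ c → ∑ i ∈ U, p i ≤ ∑ i ∈ T, p i)
    -- partition of T into D1, D2, D3, each of weight ≤ c/2
    (D1 D2 D3 : Finset ι)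
    (h12 : Disjoint D1 D2) (h13 : Disjoint D1 D3) (h23 : Disjoint D2 D3)
    (hunion : D1 ∪ D2 ∪ D3 = T)
    (hD3w : ∑ i ∈ D3, w i ≤ c / 2)
    -- S : optimal solution set for capacity c/2 of the full instance
    (S : Finset ι)
    (hSfeas : ∑ i ∈ S, w i ≤ c / 2)
    (hD3S : Disjoint D3 S) :
    max (max (∑ i ∈ D1, p i) (∑ i ∈ D2, p i)) (∑ i ∈ D3, p i) ≥
      (1 / 2) * ∑ i ∈ S, p i := by
  have hexchange : ∑ i ∈ S, p i + ∑ i ∈ D3, p i ≤ ∑ i ∈ T, p i :=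
    sum_add_sum_le_of_forall_sum_le hTopt hD3S.symm (by linarith)
  rw [← hunion, sum_union_union_of_pairwise_disjoint p h12 h13 h23] at hexchange
  have hS : ∑ i ∈ S, p i ≤ ∑ i ∈ D1, p i + ∑ i ∈ D2, p i := by linarith
  exact (half_mul_le_max_of_le_add hS).trans (le_max_left _ _)

/-- Three-part decomposition inequality for the top-down analysis. -/
theorem three_part_max_ge_half {ι : Type*} [Fintype ι] [DecidableEq ι]
    (p w : ι → ℝ) (c : ℝ)
    (hp : ∀ i, 0 ≤ p i) (hw : ∀ i, 0 < w i) (hwc : ∀ i, w i ≤ c / 2)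
    -- T : optimal solution set for capacity c
    (T : Finset ι)
    (hTfeas : ∑ i ∈ T, w i ≤ c)
    (hTopt : ∀ U : Finset ι, ∑ i ∈ U, w i ≤ c → ∑ i ∈ U, p i ≤ ∑ i ∈ T, p i)
    -- partition of T into D1, D2, D3, each of weight ≤ c/2
    (D1 D2 D3 : Finset ι)
    (h12 : Disjoint D1 D2) (h13 : Disjoint D1 D3) (h23 : Disjoint D2 D3)
    (hunion : D1 ∪ D2 ∪ D3 = T)
    (hD1w : ∑ i ∈ D1, w i ≤ c / 2)
    (hD2w : ∑ i ∈ D2, w i ≤ c / 2)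
    (hD3w : ∑ i ∈ D3, w i ≤ c / 2)
    -- S : optimal solution set for capacity c/2 of the full instance
    (S : Finset ι)
    (hSfeas : ∑ i ∈ S, w i ≤ c / 2)
    (hSopt : ∀ U : Finset ι, ∑ i ∈ U, w i ≤ c / 2 → ∑ i ∈ U, p i ≤ ∑ i ∈ S, p i)
    (hD3S : Disjoint D3 S) :
    max (max (∑ i ∈ D1, p i) (∑ i ∈ D2, p i)) (∑ i ∈ D3, p i) ≥
      (1 / 2) * ∑ i ∈ S, p i :=
  three_part_max_ge_half_general p w c T hTopt D1 D2 D3 h12 h13 h23 hunion hD3w S hSfeas hD3S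
end

section
/- In the bottom-up iterative knapsack with all weights ≤ c/2: if the split item I_s relative to the ordering (items of Opt_c ∩ Opt_{c/2} first) exists and is not in Opt_{c/2}, then its profit satisfies p(I_s) ≤ min(P(Opt_{c/2}), P(A)), where A is the second-stage packing; consequently p(I_s) ≤ (1/2)·(P(Opt_{c/2}) + P(A)). -/
/-!
The split item fits alone both into capacity `c/2` and, being outside `Opt_{c/2}`, into the
residual capacity `c - w(Opt_{c/2}) ≥ c/2` of the second stage; so the singleton `{I_s}` is a
competitor in both optimisation problems.
-/

theorem split_item_profit_bound_general {ι : Type*}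
    (p w : ι → ℝ) (c : ℝ)
    (hwc : ∀ i, w i ≤ c / 2)
    -- S : optimal solution set for capacity c/2
    (S : Finset ι)
    (hSfeas : ∑ i ∈ S, w i ≤ c / 2)
    (hSopt : ∀ U : Finset ι, ∑ i ∈ U, w i ≤ c / 2 → ∑ i ∈ U, p i ≤ ∑ i ∈ S, p i)
    -- A : optimal second-stage packing of remaining items into capacity c - w(S)
    (A : Finset ι)
    (hAopt : ∀ B : Finset ι, Disjoint B S → ∑ i ∈ B, w i ≤ c - ∑ i ∈ S, w i →
      ∑ i ∈ B, p i ≤ ∑ i ∈ A, p i)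
    (Is : ι) (hIsS : Is ∉ S) :
    p Is ≤ min (∑ i ∈ S, p i) (∑ i ∈ A, p i) ∧
      p Is ≤ (1 / 2) * (∑ i ∈ S, p i + ∑ i ∈ A, p i) := by
  have hle_S : p Is ≤ ∑ i ∈ S, p i := by
    simpa using hSopt {Is} (by simpa using hwc Is)
  have hfits_residual : w Is ≤ c - ∑ i ∈ S, w i := by linarith [hwc Is]
  have hle_A : p Is ≤ ∑ i ∈ A, p i := by
    simpa using
      hAopt {Is} (Finset.disjoint_singleton_left.mpr hIsS) (by simpa using hfits_residual)
  exact ⟨le_min hle_S hle_A, by linarith⟩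

/-- The split item of the bottom-up iterative knapsack: an item of the optimal
capacity-`c` solution that is not in the optimal capacity-`c/2` solution has profit
at most `min(P(Opt_{c/2}), P(A))`, hence at most half of their sum. -/
theorem split_item_profit_bound {ι : Type*} [Fintype ι] [DecidableEq ι]
    (p w : ι → ℝ) (c : ℝ)
    (hp : ∀ i, 0 ≤ p i) (hw : ∀ i, 0 < w i) (hwc : ∀ i, w i ≤ c / 2)
    -- S : optimal solution set for capacity c/2
    (S : Finset ι)
    (hSfeas : ∑ i ∈ S, w i ≤ c / 2)
    (hSopt : ∀ U : Finset ι, ∑ i ∈ U, w i ≤ c / 2 → ∑ i ∈ U, p i ≤ ∑ i ∈ S, p i)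
    -- A : optimal second-stage packing of remaining items into capacity c - w(S)
    (A : Finset ι)
    (hAdisj : Disjoint A S)
    (hAfeas : ∑ i ∈ A, w i ≤ c - ∑ i ∈ S, w i)
    (hAopt : ∀ B : Finset ι, Disjoint B S → ∑ i ∈ B, w i ≤ c - ∑ i ∈ S, w i →
      ∑ i ∈ B, p i ≤ ∑ i ∈ A, p i)
    -- T : optimal solution set for capacity c, and the split item Is ∈ T, Is ∉ S
    (T : Finset ι)
    (hTfeas : ∑ i ∈ T, w i ≤ c)
    (hTopt : ∀ U : Finset ι, ∑ i ∈ U, w i ≤ c → ∑ i ∈ U, p i ≤ ∑ i ∈ T, p i)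
    (Is : ι) (hIsT : Is ∈ T) (hIsS : Is ∉ S) :
    p Is ≤ min (∑ i ∈ S, p i) (∑ i ∈ A, p i) ∧
      p Is ≤ (1 / 2) * (∑ i ∈ S, p i + ∑ i ∈ A, p i) :=
  split_item_profit_bound_general p w c hwc S hSfeas hSopt A hAopt Is hIsS
end

section
/- If in the bottom-up iterative knapsack no split item exists in Opt_c with respect to the ordering placing Opt_c ∩ Opt_{c/2} first (i.e., the prefix weight reaches exactly c/2), then the two-stage heuristic achieves the full optimum: P(heuristic) = P(Opt_c). -/
/-!
The heuristic's packing `S ∪ B` fits into capacity `c`, so it earns at most `P(T)`.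
Conversely, since `S ⊆ T`, the rest `T \ S` of the optimum fits into the residual capacity
`c - w(S)`, so the optimal second stage `B` earns at least `P(T \ S) = P(T) - P(S)`.
-/

open Finset

section TwoStageKnapsack

variable {ι α : Type*} [DecidableEq ι] [AddCommGroup α] [PartialOrder α] [IsOrderedAddMonoid α]
  {w : ι → α} {c : α} {S : Finset ι}

theorem sum_union_le_of_le_sub {B : Finset ι} (hBS : Disjoint B S)
    (hB : ∑ i ∈ B, w i ≤ c - ∑ i ∈ S, w i) : ∑ i ∈ S ∪ B, w i ≤ c := by
  rw [sum_union hBS.symm, add_comm]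
  exact le_sub_iff_add_le.mp hB

theorem sum_sdiff_le_sub_of_subset {T : Finset ι} (hST : S ⊆ T) (hT : ∑ i ∈ T, w i ≤ c) :
    ∑ i ∈ T \ S, w i ≤ c - ∑ i ∈ S, w i := by
  rw [le_sub_iff_add_le, sum_sdiff hST]
  exact hT

end TwoStageKnapsack

theorem no_split_item_heuristic_optimal_general {ι : Type*}
    (p w : ι → ℝ) (c : ℝ)
    -- T : optimal solution set for capacity c
    (T : Finset ι)
    (hTfeas : ∑ i ∈ T, w i ≤ c)
    (hTopt : ∀ U : Finset ι, ∑ i ∈ U, w i ≤ c → ∑ i ∈ U, p i ≤ ∑ i ∈ T, p i)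
    -- S : optimal solution set for capacity c/2, a prefix of T of weight exactly c/2
    (S : Finset ι) (hST : S ⊆ T)
    -- B : optimal second-stage packing
    (B : Finset ι)
    (hBdisj : Disjoint B S)
    (hBfeas : ∑ i ∈ B, w i ≤ c - ∑ i ∈ S, w i)
    (hBopt : ∀ B' : Finset ι, Disjoint B' S → ∑ i ∈ B', w i ≤ c - ∑ i ∈ S, w i →
      ∑ i ∈ B', p i ≤ ∑ i ∈ B, p i) :
    ∑ i ∈ S, p i + ∑ i ∈ B, p i = ∑ i ∈ T, p i := by
  classical
  refine le_antisymm ?_ ?_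
  · rw [← sum_union hBdisj.symm]
    exact hTopt _ (sum_union_le_of_le_sub hBdisj hBfeas)
  · calc ∑ i ∈ T, p i = ∑ i ∈ S, p i + ∑ i ∈ T \ S, p i := by
          rw [add_comm, sum_sdiff hST]
      _ ≤ ∑ i ∈ S, p i + ∑ i ∈ B, p i :=
          add_le_add_right (hBopt _ sdiff_disjoint (sum_sdiff_le_sub_of_subset hST hTfeas)) _

/-- If no split item exists, i.e. the prefix (an optimal capacity-`c/2` solution `S`
contained in the optimal capacity-`c` solution `T`) has weight exactly `c/2`, then
the bottom-up two-stage heuristic achieves the full optimum. -/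
theorem no_split_item_heuristic_optimal {ι : Type*} [Fintype ι] [DecidableEq ι]
    (p w : ι → ℝ) (c : ℝ)
    (hp : ∀ i, 0 ≤ p i) (hw : ∀ i, 0 < w i) (hwc : ∀ i, w i ≤ c / 2)
    -- T : optimal solution set for capacity c
    (T : Finset ι)
    (hTfeas : ∑ i ∈ T, w i ≤ c)
    (hTopt : ∀ U : Finset ι, ∑ i ∈ U, w i ≤ c → ∑ i ∈ U, p i ≤ ∑ i ∈ T, p i)
    -- S : optimal solution set for capacity c/2, a prefix of T of weight exactly c/2
    (S : Finset ι) (hST : S ⊆ T)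
    (hSw : ∑ i ∈ S, w i = c / 2)
    (hSopt : ∀ U : Finset ι, ∑ i ∈ U, w i ≤ c / 2 → ∑ i ∈ U, p i ≤ ∑ i ∈ S, p i)
    -- B : optimal second-stage packing
    (B : Finset ι)
    (hBdisj : Disjoint B S)
    (hBfeas : ∑ i ∈ B, w i ≤ c - ∑ i ∈ S, w i)
    (hBopt : ∀ B' : Finset ι, Disjoint B' S → ∑ i ∈ B', w i ≤ c - ∑ i ∈ S, w i →
      ∑ i ∈ B', p i ≤ ∑ i ∈ B, p i) :
    ∑ i ∈ S, p i + ∑ i ∈ B, p i = ∑ i ∈ T, p i :=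
  no_split_item_heuristic_optimal_general p w c T hTfeas hTopt S hST B hBdisj hBfeas hBopt
end
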